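/- Let S, α₀, α₁, K₁, K₂ ∈ ℝ and let Z : ℝ → ℝ be twice differentiable with 0 < Z(r) < 1 for all r. Define Φ₁ = −(1/(2Z²(1−Z)²))·[2Z(1−Z)(α₁Z + α₀)Z″ + (α₀(1−2Z) − α₁Z²)(3 − (Z′)²) + 6(1−S)Z³(1−Z)²] and Φ₂ = −(1/(2Z(1−Z)²))·[2Z(1−Z)(α₁Z + α₀)Z″ + (α₁Z(1−2Z) + α₀(2−3Z))(3 − (Z′)²) + 3(1−S)Z³(1−Z)²]. Suppose Φ₁(r) = K₁ and Φ₂(r) = K₂ for all r ∈ ℝ. Then for all r ∈ ℝ: (α₁Z(r) + α₀)·(Z′(r))² = A₄Z(r)⁴ + A₃Z(r)³ + A₂Z(r)² + A₁Z(r) + A₀, where A₄ = 3(1−S), A₃ = 2K₁ − A₄, A₂ = −2(K₁ + K₂), A₁ = 2K₂ + 3α₁, and A₀ = 3α₀. -/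
import Mathlib


/-- The first integral Φ₁. -/
noncomputable def Phi1f (S α₀ α₁ : ℝ) (Z : ℝ → ℝ) : ℝ → ℝ := fun r =>
  -(1 / (2 * (Z r) ^ 2 * (1 - Z r) ^ 2)) *
    (2 * Z r * (1 - Z r) * (α₁ * Z r + α₀) * deriv (deriv Z) r
      + (α₀ * (1 - 2 * Z r) - α₁ * (Z r) ^ 2) * (3 - (deriv Z r) ^ 2)
      + 6 * (1 - S) * (Z r) ^ 3 * (1 - Z r) ^ 2)

/-- The second first integral Φ₂. -/
noncomputable def Phi2f (S α₀ α₁ : ℝ) (Z : ℝ → ℝ) : ℝ → ℝ := fun r =>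
  -(1 / (2 * Z r * (1 - Z r) ^ 2)) *
    (2 * Z r * (1 - Z r) * (α₁ * Z r + α₀) * deriv (deriv Z) r
      + (α₁ * Z r * (1 - 2 * Z r) + α₀ * (2 - 3 * Z r)) * (3 - (deriv Z r) ^ 2)
      + 3 * (1 - S) * (Z r) ^ 3 * (1 - Z r) ^ 2)

theorem stmt8 (S α₀ α₁ K₁ K₂ : ℝ) (Z : ℝ → ℝ)
    (hZ : Differentiable ℝ Z) (hZ' : Differentiable ℝ (deriv Z))
    (hrange : ∀ r : ℝ, 0 < Z r ∧ Z r < 1)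
    (hΦ₁ : ∀ r : ℝ, Phi1f S α₀ α₁ Z r = K₁)
    (hΦ₂ : ∀ r : ℝ, Phi2f S α₀ α₁ Z r = K₂)
    (A₄ A₃ A₂ A₁ A₀ : ℝ)
    (hA₄ : A₄ = 3 * (1 - S)) (hA₃ : A₃ = 2 * K₁ - A₄)
    (hA₂ : A₂ = -2 * (K₁ + K₂)) (hA₁ : A₁ = 2 * K₂ + 3 * α₁) (hA₀ : A₀ = 3 * α₀) :
    ∀ r : ℝ, (α₁ * Z r + α₀) * (deriv Z r) ^ 2
      = A₄ * (Z r) ^ 4 + A₃ * (Z r) ^ 3 + A₂ * (Z r) ^ 2 + A₁ * Z r + A₀ := by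
  subst hA₄ hA₃ hA₂ hA₁ hA₀
  intro r
  obtain ⟨hz0, hz1⟩ := hrange r
  have hz0' : Z r ≠ 0 := ne_of_gt hz0
  have hz1' : (1 : ℝ) - Z r ≠ 0 := by linarith
  have h1 := hΦ₁ r
  have h2 := hΦ₂ r
  simp only [Phi1f, Phi2f] at h1 h2
  field_simp at h1 h2
  have key : (1 - Z r) * ((α₁ * Z r + α₀) * (deriv Z r) ^ 2
      - (3 * (1 - S) * (Z r) ^ 4 + (2 * K₁ - 3 * (1 - S)) * (Z r) ^ 3
        + -2 * (K₁ + K₂) * (Z r) ^ 2 + (2 * K₂ + 3 * α₁) * Z r + 3 * α₀)) = 0 := by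
    linear_combination h2 - h1
  rcases mul_eq_zero.mp key with h | h
  · exact absurd h hz1'
  · linarith
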